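/- arXiv:1501.06599 — 2 statements merged into one kernel-verified Lean document; each statement's English description precedes it below -/
import Mathlib

section
/- Assume 1 ≤ k ≤ n, and let G be any set of functions with P_+^{k:n} ∪ P^+_{0:n} ⊆ G ⊆ F_+^{k:n}(I). Then for every nonnegative Borel measure ν on I: [ν(f) > −∞ for all f ∈ G] if and only if [ν(p) > −∞ for all p ∈ P_+^{≤k}]. -/
open MeasureTheory Set Filter
open scoped ENNReal

noncomputable section

/-- `g` is right-continuous at every point of `I` that is not the greatest point of `I`,
and left-continuous at the greatest point of `I` when the latter exists (the class `LD`). -/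
def IsLD (I : Set ℝ) (g : ℝ → ℝ) : Prop :=
  (∀ x ∈ I, (∃ y ∈ I, x < y) → Tendsto g (nhdsWithin x (I ∩ Ioi x)) (nhds (g x))) ∧
  (∀ x ∈ I, (∀ y ∈ I, y ≤ x) → Tendsto g (nhdsWithin x (I ∩ Iio x)) (nhds (g x)))

/-- `d 0, …, d n` is the system of generalized derivatives of `f` on `I` with respect to the
gauge sequence `w`; i.e., `f ∈ L^n` with `f^{(j)} = d j` for `j = 0, …, n`. -/
structure IsGenL (I : Set ℝ) (w : ℕ → ℝ → ℝ) (n : ℕ) (f : ℝ → ℝ) (d : ℕ → ℝ → ℝ) : Prop where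
  base : ∀ x ∈ I, f x = d 0 x * w 0 x
  ld : IsLD I (d n)
  integrable : ∀ j < n, ∀ z ∈ I, ∀ x ∈ I,
    IntervalIntegrable (fun u => d (j + 1) u * w (j + 1) u) volume z x
  deriv_eq : ∀ j < n, ∀ z ∈ I, ∀ x ∈ I,
    d j x = d j z + ∫ u in z..x, d (j + 1) u * w (j + 1) u

/-- `f ∈ F_+^{k:n}(I)` (with derivative system `d`): all the generalized derivatives
`f^{(j)} = d j` of orders `j = k-1, …, n` are nondecreasing on `I`. -/
def MemF (I : Set ℝ) (w : ℕ → ℝ → ℝ) (k n : ℕ) (f : ℝ → ℝ) (d : ℕ → ℝ → ℝ) : Prop :=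
  IsGenL I w n f d ∧ ∀ j, k - 1 ≤ j → j ≤ n → MonotoneOn (d j) I

/-- `w` is a sequence of positive, Borel-measurable, locally bounded gauge functions on `I`. -/
def IsGauge (I : Set ℝ) (w : ℕ → ℝ → ℝ) : Prop :=
  ∀ j, (∀ x ∈ I, 0 < w j x) ∧ Measurable (fun x : I => w j x) ∧
    ∀ K ⊆ I, IsCompact K → ∃ C, ∀ x ∈ K, |w j x| ≤ C

def pAux (w : ℕ → ℝ → ℝ) (t : ℝ) (m : ℕ) : ℕ → ℝ → ℝ
  | 0 => w m
  | (i + 1) => fun x => w (m - (i + 1)) x * ∫ u in t..x, pAux w t m i u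

/-- The `w`-polynomial `p_{t;j,m}` (for `t ∈ I`). -/
def pfun (w : ℕ → ℝ → ℝ) (t : ℝ) (j m : ℕ) : ℝ → ℝ := pAux w t m (m - j)

/-- The "positive part" `p^+_{t;j,m}`. -/
def pplus (w : ℕ → ℝ → ℝ) (t : ℝ) (j m : ℕ) : ℝ → ℝ := fun x =>
  if t ≤ x then pfun w t j m x else 0

def pAuxE (w : ℕ → ℝ → ℝ) (I : Set ℝ) (m : ℕ) : ℕ → ℝ → ℝ≥0∞
  | 0 => fun x => ENNReal.ofReal (w m x)
  | (i + 1) => fun x =>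
      ENNReal.ofReal (w (m - (i + 1)) x) * ∫⁻ u in I ∩ Iio x, pAuxE w I m i u

/-- `p_{a;j,m} : I → [0, ∞]`, where `a` is the left endpoint of `I` (the integrals from `a`
are taken over `(a, x) ∩ I = I ∩ Iio x`). -/
def pE (w : ℕ → ℝ → ℝ) (I : Set ℝ) (j m : ℕ) : ℝ → ℝ≥0∞ := pAuxE w I m (m - j)

/-- The filter of `x ↓ a` within `I`, `a` being the left endpoint of `I`. -/
def leftEndFilter (I : Set ℝ) : Filter ℝ := ⨅ c ∈ I, Filter.principal (I ∩ Iic c)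

/-- `ν(f) = ∫_I f dν ∈ [−∞, ∞]`. -/
def nuEval (ν : Measure ℝ) (I : Set ℝ) (f : ℝ → ℝ) : EReal :=
  ((∫⁻ x in I, ENNReal.ofReal (f x) ∂ν : ℝ≥0∞) : EReal)
    - ((∫⁻ x in I, ENNReal.ofReal (-f x) ∂ν : ℝ≥0∞) : EReal)

/-- The expectation `E g ∈ [−∞, ∞]` (in the extended sense). -/
def eval' {α : Type*} [MeasurableSpace α] (P : Measure α) (g : α → ℝ) : EReal :=
  ((∫⁻ a, ENNReal.ofReal (g a) ∂P : ℝ≥0∞) : EReal)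
    - ((∫⁻ a, ENNReal.ofReal (-g a) ∂P : ℝ≥0∞) : EReal)

/-!
`P_+^{≤k} ⊆ F_+^{k:n}(I)`: a `w`-polynomial of degree `k` with nonnegative top derivative, its
derivatives of order `> k` set to zero, has nondecreasing derivatives of orders `k - 1, …, n`.
Hence finiteness on `G` gives finiteness on `P_+^{≤k}`.

Conversely, every `f ∈ F_+^{k:n}(I)` is bounded below on `I` by some `q ∈ P_+^{≤k}`, so
`ν(f) ≥ ν(q) > -∞`. Take a point `t ∈ I` that is not the least one and let `q` be the Taylor
polynomial of `f` at `t` of the odd degree `m ∈ {k - 1, k}`. The differences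
`e_j = f^{(j)} - q^{(j)}` vanish at `t` for `j < m`, and `e_m = f^{(m)} - f^{(m)}(t)` is `≥ 0` to
the right of `t` and `≤ 0` to the left. Integrating down from `m`, `e_j ≥ 0` to the right of `t`
and `(-1)^j e_j ≥ 0` to the left, so `e_0 ≥ 0`. The top coefficient of `q` is `0` or `f^{(k)}(t)`,
and the latter is `≥ 0`: otherwise `f^{(k)} < 0` on `[p, t]` for some `p < t` in `I`, and
`f^{(k-1)}` would decrease there.
-/

section Gauge

variable {I : Set ℝ} {w : ℕ → ℝ → ℝ} {z x : ℝ}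

lemma IsGauge.integrableOn_uIcc (hw : IsGauge I w) (hI : I.OrdConnected) (hz : z ∈ I)
    (hx : x ∈ I) (j : ℕ) : IntegrableOn (w j) (uIcc z x) := by
  have hsub : uIcc z x ⊆ I := hI.uIcc_subset hz hx
  obtain ⟨C, hC⟩ := (hw j).2.2 _ hsub isCompact_uIcc
  have hmeas : AEMeasurable (w j) (volume.restrict I) :=
    (aemeasurable_restrict_iff_comap_subtype hI.measurableSet).2 (hw j).2.1.aemeasurable
  exact .of_bound measure_Icc_lt_top (hmeas.mono_set hsub).aestronglyMeasurable C
    (ae_restrict_of_forall_mem measurableSet_uIcc hC)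

lemma IsGauge.intervalIntegrable_mul (hw : IsGauge I w) (hI : I.OrdConnected) (hz : z ∈ I)
    (hx : x ∈ I) {g : ℝ → ℝ} (hg : ContinuousOn g (uIcc z x)) (j : ℕ) :
    IntervalIntegrable (fun u => g u * w j u) volume z x :=
  (IntegrableOn.continuousOn_mul hg (hw.integrableOn_uIcc hI hz hx j)
    isCompact_uIcc).intervalIntegrable

end Gauge
lemma isLD_of_forall_eq {I : Set ℝ} {g : ℝ → ℝ} {c : ℝ} (h : ∀ x ∈ I, g x = c) : IsLD I g := by
  have key : ∀ x ∈ I, ∀ s ⊆ I, Tendsto g (nhdsWithin x s) (nhds (g x)) := fun x hx s hs => by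
    rw [h x hx]
    exact tendsto_const_nhds.congr' <|
      eventually_mem_nhdsWithin.mono fun y hy => (h y (hs hy)).symm
  exact ⟨fun x hx _ => key x hx _ inter_subset_left, fun x hx _ => key x hx _ inter_subset_left⟩

section Taylor

variable {I : Set ℝ} {w : ℕ → ℝ → ℝ} {t : ℝ} (a : ℕ → ℝ) (m : ℕ)

/-- Indexed by the codegree `i = m - j`, so that the recursion starts at the constant top
derivative. -/
def taylorDerivAux (w : ℕ → ℝ → ℝ) (t : ℝ) (a : ℕ → ℝ) (m : ℕ) : ℕ → ℝ → ℝ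
  | 0 => fun _ => a m
  | i + 1 => fun x => a (m - (i + 1)) + ∫ u in t..x, taylorDerivAux w t a m i u * w (m - i) u

/-- The generalized derivatives of the `w`-polynomial of degree `m` whose generalized derivatives
at `t` are `a 0, …, a m`. -/
def taylorDeriv (w : ℕ → ℝ → ℝ) (t : ℝ) (a : ℕ → ℝ) (m j : ℕ) : ℝ → ℝ :=
  taylorDerivAux w t a m (m - j)

lemma taylorDeriv_self (x : ℝ) : taylorDeriv w t a m m x = a m := by
  simp [taylorDeriv, taylorDerivAux]

lemma taylorDeriv_of_lt {j : ℕ} (hj : j < m) (x : ℝ) :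
    taylorDeriv w t a m j x = a j + ∫ u in t..x, taylorDeriv w t a m (j + 1) u * w (j + 1) u := by
  rw [taylorDeriv, show m - j = m - (j + 1) + 1 by omega, taylorDerivAux,
    show m - (m - (j + 1) + 1) = j by omega, show m - (m - (j + 1)) = j + 1 by omega]
  rfl

variable {a m}

lemma taylorDerivAux_continuousOn (hw : IsGauge I w) (hI : I.OrdConnected) (ht : t ∈ I) :
    ∀ i, ∀ {z x : ℝ}, z ∈ I → x ∈ I → ContinuousOn (taylorDerivAux w t a m i) (uIcc z x)
  | 0, _, _, _, _ => continuousOn_const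
  | i + 1, z, x, hz, hx => by
    have hprim : ∀ y ∈ I, ContinuousOn
        (fun x => ∫ u in t..x, taylorDerivAux w t a m i u * w (m - i) u) (uIcc t y) :=
      fun y hy => intervalIntegral.continuousOn_primitive_interval'
        (hw.intervalIntegrable_mul hI ht hy (taylorDerivAux_continuousOn hw hI ht i ht hy) _)
        left_mem_uIcc
    have hsub : uIcc z x ⊆ uIcc t z ∪ uIcc t x :=
      uIcc_comm t z ▸ uIcc_subset_uIcc_union_uIcc
    exact continuousOn_const.add <|
      ((hprim z hz).union_of_isClosed (hprim x hx) isClosed_Icc isClosed_Icc).mono hsub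

lemma isGenL_taylorDeriv (hw : IsGauge I w) (hI : I.OrdConnected) (ht : t ∈ I) :
    IsGenL I w m (fun x => taylorDeriv w t a m 0 x * w 0 x) (taylorDeriv w t a m) where
  base _ _ := rfl
  ld := isLD_of_forall_eq fun x _ => taylorDeriv_self a m x
  integrable _ _ _ hz _ hx :=
    hw.intervalIntegrable_mul hI hz hx (taylorDerivAux_continuousOn hw hI ht _ hz hx) _
  deriv_eq j hj z hz x hx := by
    have hint : ∀ y ∈ I, IntervalIntegrable
        (fun u => taylorDeriv w t a m (j + 1) u * w (j + 1) u) volume t y := fun y hy =>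
      hw.intervalIntegrable_mul hI ht hy (taylorDerivAux_continuousOn hw hI ht _ ht hy) _
    rw [taylorDeriv_of_lt a m hj x, taylorDeriv_of_lt a m hj z,
      ← intervalIntegral.integral_interval_sub_left (hint x hx) (hint z hz)]
    ring

end Taylor
section ZeroAbove

variable {I : Set ℝ} {w : ℕ → ℝ → ℝ} {m n : ℕ} {p : ℝ → ℝ} {d : ℕ → ℝ → ℝ} {c : ℝ}

/-- Views a `w`-polynomial of degree `m` as an element of `L^n` for `n ≥ m`. -/
def zeroAbove (m : ℕ) (d : ℕ → ℝ → ℝ) : ℕ → ℝ → ℝ := fun j => if j ≤ m then d j else 0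

lemma zeroAbove_apply_of_forall_eq (hc : ∀ x ∈ I, d m x = c) (hmn : m ≤ n) {x : ℝ}
    (hx : x ∈ I) : zeroAbove m d n x = if n = m then c else 0 := by
  by_cases hnm : n = m
  · simp [zeroAbove, hnm, hc x hx]
  · simp [zeroAbove, hnm, show ¬n ≤ m by omega]

lemma IsGenL.zeroAbove_of_forall_eq (hd : IsGenL I w m p d) (hc : ∀ x ∈ I, d m x = c) (hmn : m ≤ n) :
    IsGenL I w n p (zeroAbove m d) where
  base x hx := by simpa [zeroAbove] using hd.base x hx
  ld := isLD_of_forall_eq fun _ hx => zeroAbove_apply_of_forall_eq hc hmn hx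
  integrable j _ z hz x hx := by
    by_cases hj : j + 1 ≤ m
    · simpa [zeroAbove, hj] using hd.integrable j hj z hz x hx
    · simp [zeroAbove, hj]
  deriv_eq j _ z hz x hx := by
    rcases lt_trichotomy j m with hj | rfl | hj
    · simpa [zeroAbove, hj.le, Nat.succ_le_of_lt hj] using hd.deriv_eq j hj z hz x hx
    · simp [zeroAbove, hc x hx, hc z hz]
    · simp [zeroAbove, show ¬j ≤ m by omega, show ¬j + 1 ≤ m by omega]

end ZeroAbove

lemma IsGenL.monotoneOn_of_nonneg {I : Set ℝ} {w : ℕ → ℝ → ℝ} {n j : ℕ} {f : ℝ → ℝ}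
    {d : ℕ → ℝ → ℝ} (hd : IsGenL I w n f d) (hI : I.OrdConnected) (hw : IsGauge I w)
    (hj : j < n) (hnonneg : ∀ x ∈ I, 0 ≤ d (j + 1) x) : MonotoneOn (d j) I := by
  intro x hx y hy hxy
  rw [hd.deriv_eq j hj x hx y hy, le_add_iff_nonneg_right]
  exact intervalIntegral.integral_nonneg hxy fun u hu =>
    mul_nonneg (hnonneg u (hI.out hx hy hu)) ((hw _).1 u (hI.out hx hy hu)).le

lemma memF_zeroAbove {I : Set ℝ} {w : ℕ → ℝ → ℝ} {k n : ℕ} {p : ℝ → ℝ} {d : ℕ → ℝ → ℝ} {c : ℝ}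
    (hI : I.OrdConnected) (hw : IsGauge I w) (hk : 1 ≤ k) (hkn : k ≤ n)
    (hd : IsGenL I w k p d) (hc : ∀ x ∈ I, d k x = c) (hc0 : 0 ≤ c) :
    MemF I w k n p (zeroAbove k d) := by
  refine ⟨hd.zeroAbove_of_forall_eq hc hkn, fun j hj _ => ?_⟩
  rcases (show j = k - 1 ∨ k ≤ j by omega) with rfl | hkj
  · have hmono : MonotoneOn (d (k - 1)) I := hd.monotoneOn_of_nonneg hI hw (by omega)
      fun x hx => by rw [Nat.sub_add_cancel hk, hc x hx]; exact hc0
    simpa [zeroAbove] using hmono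
  · intro x hx y hy _
    rw [zeroAbove_apply_of_forall_eq hc hkj hx, zeroAbove_apply_of_forall_eq hc hkj hy]

section Descent

variable {I : Set ℝ} {w : ℕ → ℝ → ℝ} {e : ℕ → ℝ → ℝ} {t : ℝ} {m : ℕ}

lemma nonneg_of_iterated_integral_right (hI : I.OrdConnected) (hw : IsGauge I w) (ht : t ∈ I)
    (he : ∀ j < m, ∀ x ∈ I, e j x = ∫ u in t..x, e (j + 1) u * w (j + 1) u)
    (htop : ∀ x ∈ I, t ≤ x → 0 ≤ e m x) {j : ℕ} (hj : j ≤ m) :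
    ∀ x ∈ I, t ≤ x → 0 ≤ e j x := by
  induction hj using Nat.decreasingInduction with
  | self => exact htop
  | of_succ j hj ih =>
    intro x hx htx
    rw [he j hj x hx]
    exact intervalIntegral.integral_nonneg htx fun u hu =>
      mul_nonneg (ih u (hI.out ht hx hu) hu.1) ((hw _).1 u (hI.out ht hx hu)).le

lemma alternating_nonneg_of_iterated_integral_left (hI : I.OrdConnected) (hw : IsGauge I w)
    (ht : t ∈ I) (he : ∀ j < m, ∀ x ∈ I, e j x = ∫ u in t..x, e (j + 1) u * w (j + 1) u)
    (htop : ∀ x ∈ I, x ≤ t → 0 ≤ (-1) ^ m * e m x) {j : ℕ} (hj : j ≤ m) :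
    ∀ x ∈ I, x ≤ t → 0 ≤ (-1) ^ j * e j x := by
  induction hj using Nat.decreasingInduction with
  | self => exact htop
  | of_succ j hj ih =>
    intro x hx hxt
    have hflip : (-1) ^ j * e j x = ∫ u in x..t, (-1) ^ (j + 1) * e (j + 1) u * w (j + 1) u := by
      simp_rw [he j hj x hx, intervalIntegral.integral_symm x t, mul_assoc,
        intervalIntegral.integral_const_mul]
      ring
    rw [hflip]
    exact intervalIntegral.integral_nonneg hxt fun u hu =>
      mul_nonneg (ih u (hI.out hx ht hu) hu.2) ((hw _).1 u (hI.out hx ht hu)).le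

end Descent

section Minorant

variable {I : Set ℝ} {w : ℕ → ℝ → ℝ} {k m n : ℕ} {f : ℝ → ℝ} {d : ℕ → ℝ → ℝ} {t : ℝ}

lemma IsGenL.deriv_nonneg_of_monotoneOn (hd : IsGenL I w n f d) (hI : I.OrdConnected)
    (hw : IsGauge I w) {j : ℕ} (hj : j < n) (hmono : MonotoneOn (d j) I)
    (hmono' : MonotoneOn (d (j + 1)) I) {p q : ℝ} (hp : p ∈ I) (hq : q ∈ I) (hpq : p < q) :
    0 ≤ d (j + 1) q := by
  by_contra! hneg
  have hle : ∫ u in p..q, d (j + 1) u * w (j + 1) u ≤ ∫ u in p..q, d (j + 1) q * w (j + 1) u :=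
    intervalIntegral.integral_mono_on hpq.le (hd.integrable j hj p hp q hq)
      (hw.intervalIntegrable_mul hI hp hq continuousOn_const _) fun u hu =>
        mul_le_mul_of_nonneg_right (hmono' (hI.out hp hq hu) hq hu.2)
          ((hw _).1 u (hI.out hp hq hu)).le
  have hneg_int : ∫ u in p..q, d (j + 1) q * w (j + 1) u < 0 := by
    rw [intervalIntegral.integral_const_mul]
    exact mul_neg_of_neg_of_pos hneg <| intervalIntegral.intervalIntegral_pos_of_pos_on
      (hw.integrableOn_uIcc hI hp hq _).intervalIntegrable
      (fun u hu => (hw _).1 u (hI.out hp hq (Ioo_subset_Icc_self hu))) hpq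
  linarith [hd.deriv_eq j hj p hp q hq, hmono hp hq hpq.le]

/-- With `e_j = d j - q_j`, `e_m = d m - d m t` is `≥ 0` right of `t` and, `m` being odd,
`(-1)^m e_m ≥ 0` left of `t`; both propagate down to `e_0`. -/
lemma IsGenL.taylorDeriv_le (hd : IsGenL I w n f d) (hI : I.OrdConnected) (hw : IsGauge I w)
    (ht : t ∈ I) (hmn : m ≤ n) (hm : Odd m) (hmono : MonotoneOn (d m) I) {x : ℝ} (hx : x ∈ I) :
    taylorDeriv w t (fun j => d j t) m 0 x ≤ d 0 x := by
  set e : ℕ → ℝ → ℝ := fun j x => d j x - taylorDeriv w t (fun j => d j t) m j x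
  have he : ∀ j < m, ∀ x ∈ I, e j x = ∫ u in t..x, e (j + 1) u * w (j + 1) u := by
    intro j hj x hx
    simp only [e, sub_mul]
    rw [intervalIntegral.integral_sub (hd.integrable j (by omega) t ht x hx)
        ((isGenL_taylorDeriv hw hI ht).integrable j hj t ht x hx),
      hd.deriv_eq j (by omega) t ht x hx, taylorDeriv_of_lt _ _ hj x]
    ring
  have htop : ∀ y, e m y = d m y - d m t := fun y => by simp only [e, taylorDeriv_self]
  rcases le_total t x with htx | hxt
  · have := nonneg_of_iterated_integral_right hI hw ht he
      (fun y hy hty => by rw [htop]; linarith [hmono ht hy hty]) m.zero_le x hx htx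
    simpa [e] using this
  · have := alternating_nonneg_of_iterated_integral_left hI hw ht he
      (fun y hy hyt => by rw [htop, hm.neg_one_pow]; linarith [hmono hy ht hyt]) m.zero_le x hx hxt
    simpa [e] using this

/-- The minorant is the Taylor polynomial at a non-minimal point `t`, of the odd degree
`m ∈ {k - 1, k}`; non-minimality of `t` gives `d k t ≥ 0`. -/
lemma MemF.exists_isGenL_le (hf : MemF I w k n f d) (hI : I.OrdConnected) (hw : IsGauge I w)
    (hk : 1 ≤ k) (hkn : k ≤ n) (hIne : ∃ p ∈ I, ∃ t ∈ I, p < t) :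
    ∃ q dq c, IsGenL I w k q dq ∧ (∀ x ∈ I, dq k x = c) ∧ 0 ≤ c ∧ ∀ x ∈ I, q x ≤ f x := by
  obtain ⟨p, hp, t, ht, hpt⟩ := hIne
  obtain ⟨m, hm, hkm, hmk⟩ : ∃ m, Odd m ∧ k - 1 ≤ m ∧ m ≤ k := by
    rcases Nat.even_or_odd k with hk' | hk'
    · exact ⟨k - 1, Nat.Even.sub_odd hk hk' odd_one, le_rfl, Nat.sub_le k 1⟩
    · exact ⟨k, hk', Nat.sub_le k 1, le_rfl⟩
  have htop : ∀ x ∈ I, taylorDeriv w t (fun j => d j t) m m x = d m t :=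
    fun x _ => taylorDeriv_self _ m x
  refine ⟨_, _, _, (isGenL_taylorDeriv hw hI ht).zeroAbove_of_forall_eq htop hmk,
    fun x hx => zeroAbove_apply_of_forall_eq htop hmk hx, ?_, fun x hx => ?_⟩
  · split_ifs with hkm'
    · have := hf.1.deriv_nonneg_of_monotoneOn hI hw (j := k - 1) (by omega) (hf.2 _ le_rfl (by omega))
        (by rw [Nat.sub_add_cancel hk]; exact hf.2 k (by omega) hkn) hp ht hpt
      rwa [Nat.sub_add_cancel hk, hkm'] at this
    · exact le_rfl
  · rw [hf.1.base x hx]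
    exact mul_le_mul_of_nonneg_right
      (hf.1.taylorDeriv_le hI hw ht (hmk.trans hkn) hm (hf.2 m hkm (hmk.trans hkn)) hx)
      ((hw 0).1 x hx).le

end Minorant

theorem stmt_12_general (I : Set ℝ) (hI : I.OrdConnected) (hIne : ∃ p ∈ I, ∃ q ∈ I, p < q)
    (w : ℕ → ℝ → ℝ) (hw : IsGauge I w)
    (k n : ℕ) (hk : 1 ≤ k) (hkn : k ≤ n)
    (G : Set (ℝ → ℝ))
    (hG1 : ∀ p : ℝ → ℝ,
      ((∃ dp, IsGenL I w n p dp ∧ ∃ c', ∀ x ∈ I, dp n x = c') ∧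
        (∃ dd, MemF I w k n p dd)) → p ∈ G)
    (hG3 : ∀ f ∈ G, ∃ d, MemF I w k n f d)
    (ν : Measure ℝ) :
    (∀ f ∈ G, (∫⁻ x in I, ENNReal.ofReal (-f x) ∂ν) ≠ ⊤) ↔
    (∀ (p : ℝ → ℝ) (dp : ℕ → ℝ → ℝ) (c' : ℝ), IsGenL I w k p dp →
      (∀ x ∈ I, dp k x = c') → 0 ≤ c' →
      (∫⁻ x in I, ENNReal.ofReal (-p x) ∂ν) ≠ ⊤) := by
  constructor
  · intro hG p dp c hp hc hc0
    have hmem := memF_zeroAbove hI hw hk hkn hp hc hc0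
    exact hG p <| hG1 p
      ⟨⟨_, hmem.1, _, fun x hx => zeroAbove_apply_of_forall_eq hc hkn hx⟩, _, hmem⟩
  · intro hP f hf
    obtain ⟨d, hfd⟩ := hG3 f hf
    obtain ⟨q, dq, c, hq, hqc, hc0, hqf⟩ := hfd.exists_isGenL_le hI hw hk hkn hIne
    refine ne_top_of_le_ne_top (hP q dq c hq hqc hc0) <|
      setLIntegral_mono' hI.measurableSet fun x hx => ?_
    exact ENNReal.ofReal_le_ofReal (neg_le_neg (hqf x hx))

/-- Proposition `N_+^k`, part (i): for `k ≤ n`, the admissible set of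
measures is characterized by the `w`-polynomials in `P_+^{≤k}`. -/
theorem stmt_12 (I : Set ℝ) (hI : I.OrdConnected) (hIne : ∃ p ∈ I, ∃ q ∈ I, p < q)
    (w : ℕ → ℝ → ℝ) (hw : IsGauge I w)
    (k n : ℕ) (hk : 1 ≤ k) (hkn : k ≤ n)
    (G : Set (ℝ → ℝ))
    (hG1 : ∀ p : ℝ → ℝ,
      ((∃ dp, IsGenL I w n p dp ∧ ∃ c', ∀ x ∈ I, dp n x = c') ∧
        (∃ dd, MemF I w k n p dd)) → p ∈ G)
    (hG2 : ∀ t ∈ I, pplus w t 0 n ∈ G)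
    (hG3 : ∀ f ∈ G, ∃ d, MemF I w k n f d)
    (ν : Measure ℝ) :
    (∀ f ∈ G, (∫⁻ x in I, ENNReal.ofReal (-f x) ∂ν) ≠ ⊤) ↔
    (∀ (p : ℝ → ℝ) (dp : ℕ → ℝ → ℝ) (c' : ℝ), IsGenL I w k p dp →
      (∀ x ∈ I, dp k x = c') → 0 ≤ c' →
      (∫⁻ x in I, ENNReal.ofReal (-p x) ∂ν) ≠ ⊤) :=
  stmt_12_general I hI hIne w hw k n hk hkn G hG1 hG3 ν
end
end

section
/- Assume k = n+1, k is odd, and a ∉ I. Then for every nonnegative Borel measure ν on I, the following are equivalent: (1) ν(f) > −∞ for every f ∈ F_+^{n+1:n}(I); (2) ν(p) ∈ ℝ for every p ∈ P^{≤n} and there exists ã ∈ I with ν((a, ã)) = 0. -/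
/-!
Sufficiency: if `ν` does not charge `I ∩ (-∞, a')`, then on `I ∩ [a', ∞)` every
`f ∈ F_+^{n+1:n}(I)` lies above its Taylor `w`-polynomial `p` at `a'` (the top derivative is
nondecreasing and the lower ones are recovered by integrating from `a'`), so `ν(f⁻) ≤ ν(|p|) < ∞`.

Necessity: a `w`-polynomial `p` and `-p` both belong to `F_+^{n+1:n}(I)`, so `ν(|p|) < ∞`. If every
initial piece `I ∩ (-∞, t)` carried mass, take `t_m ↓ inf I` in `I` and let `f` be the `n`-fold
integral from `t_0` of the nondecreasing step function `-∑_{m : x < t_m} c_m`. To the left of `t_0`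
the iterated integrals alternate in sign, so for even `n` we get `-f ≥ c_M e_M w_0` on
`I ∩ (-∞, t_M)`, where `e_M > 0` there is the `n`-fold integral of the indicator of `(-∞, t_M)`
anchored at `t_M`. Choosing `c_M ν(e_M w_0 ; I ∩ (-∞, t_M)) > M` forces `ν(f⁻) = ∞`.
-/

open MeasureTheory Set Filter
open scoped ENNReal

noncomputable section

open Topology

def LocBddMeasurableOn (g : ℝ → ℝ) (I : Set ℝ) : Prop :=
  ∀ z ∈ I, ∀ x ∈ I, z ≤ x →
    AEMeasurable g (volume.restrict (Icc z x)) ∧ ∃ C, ∀ u ∈ Icc z x, |g u| ≤ C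

section LocBddMeasurableOn

variable {I : Set ℝ} {g h : ℝ → ℝ}

theorem LocBddMeasurableOn.mul (hg : LocBddMeasurableOn g I) (hh : LocBddMeasurableOn h I) :
    LocBddMeasurableOn (fun u => g u * h u) I := by
  intro z hz x hx hzx
  obtain ⟨hgm, C, hC⟩ := hg z hz x hx hzx
  obtain ⟨hhm, D, hD⟩ := hh z hz x hx hzx
  refine ⟨hgm.mul hhm, C * D, fun u hu => ?_⟩
  rw [abs_mul]
  exact mul_le_mul (hC u hu) (hD u hu) (abs_nonneg _) ((abs_nonneg _).trans (hC u hu))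

theorem LocBddMeasurableOn.intervalIntegrable (hg : LocBddMeasurableOn g I) {z x : ℝ}
    (hz : z ∈ I) (hx : x ∈ I) : IntervalIntegrable g volume z x := by
  wlog hzx : z ≤ x generalizing z x
  · exact (this hx hz (le_of_not_ge hzx)).symm
  obtain ⟨hm, C, hC⟩ := hg z hz x hx hzx
  rw [intervalIntegrable_iff_integrableOn_Icc_of_le hzx]
  exact Integrable.of_bound hm.aestronglyMeasurable C
    ((ae_restrict_iff' measurableSet_Icc).2 (ae_of_all _ hC))

theorem MonotoneOn.locBddMeasurableOn (hI : I.OrdConnected) (hg : MonotoneOn g I) :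
    LocBddMeasurableOn g I := by
  intro z hz x hx hzx
  have hsub := hI.out hz hx
  exact ⟨aemeasurable_restrict_of_monotoneOn measurableSet_Icc (hg.mono hsub), max |g z| |g x|,
    fun u hu => abs_le_max_abs_abs (hg hz (hsub hu) hu.1) (hg (hsub hu) hx hu.2)⟩

theorem AntitoneOn.locBddMeasurableOn (hI : I.OrdConnected) (hg : AntitoneOn g I) :
    LocBddMeasurableOn g I := by
  intro z hz x hx hzx
  have hsub := hI.out hz hx
  exact ⟨aemeasurable_restrict_of_antitoneOn measurableSet_Icc (hg.mono hsub), max |g x| |g z|,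
    fun u hu => abs_le_max_abs_abs (hg (hsub hu) hx hu.2) (hg hz (hsub hu) hu.1)⟩

theorem ContinuousOn.locBddMeasurableOn (hI : I.OrdConnected) (hg : ContinuousOn g I) :
    LocBddMeasurableOn g I := by
  intro z hz x hx _
  have hc := hg.mono (hI.out hz hx)
  obtain ⟨C, hC⟩ := isCompact_Icc.exists_bound_of_continuousOn hc
  exact ⟨hc.aemeasurable measurableSet_Icc, C, hC⟩

end LocBddMeasurableOn

section Gauge

variable {I : Set ℝ} {w : ℕ → ℝ → ℝ}

theorem IsGauge.aemeasurable (hw : IsGauge I w) (hI : MeasurableSet I) (j : ℕ) (μ : Measure ℝ) :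
    AEMeasurable (w j) (μ.restrict I) :=
  (aemeasurable_restrict_iff_comap_subtype hI).2 (hw j).2.1.aemeasurable

theorem IsGauge.locBddMeasurableOn (hw : IsGauge I w) (hI : I.OrdConnected) (j : ℕ) :
    LocBddMeasurableOn (w j) I := by
  intro z hz x hx _
  have hsub := hI.out hz hx
  obtain ⟨C, hC⟩ := (hw j).2.2 _ hsub isCompact_Icc
  exact ⟨(hw.aemeasurable hI.measurableSet j volume).mono_measure
    (Measure.restrict_mono hsub le_rfl), C, hC⟩

end Gauge

theorem exists_Icc_mem_nhdsWithin {I : Set ℝ} {x : ℝ} (hx : x ∈ I) :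
    ∃ lo ∈ I, ∃ hi ∈ I, Icc lo hi ∈ 𝓝[I] x := by
  have hlo : ∃ lo ∈ I, Ici lo ∈ 𝓝[I] x := by
    by_cases h : ∃ y ∈ I, y < x
    · obtain ⟨y, hy, hyx⟩ := h
      exact ⟨y, hy, mem_nhdsWithin_of_mem_nhds (Ici_mem_nhds hyx)⟩
    · push Not at h
      exact ⟨x, hx, mem_of_superset self_mem_nhdsWithin h⟩
  have hhi : ∃ hi ∈ I, Iic hi ∈ 𝓝[I] x := by
    by_cases h : ∃ y ∈ I, x < y
    · obtain ⟨y, hy, hxy⟩ := h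
      exact ⟨y, hy, mem_nhdsWithin_of_mem_nhds (Iic_mem_nhds hxy)⟩
    · push Not at h
      exact ⟨x, hx, mem_of_superset self_mem_nhdsWithin h⟩
  obtain ⟨lo, hlo, hlo'⟩ := hlo
  obtain ⟨hi, hhi, hhi'⟩ := hhi
  exact ⟨lo, hlo, hi, hhi, inter_mem hlo' hhi'⟩

theorem continuousOn_primitive_of_intervalIntegrable {I : Set ℝ} {f : ℝ → ℝ} {t : ℝ}
    (ht : t ∈ I) (hf : ∀ z ∈ I, ∀ x ∈ I, IntervalIntegrable f volume z x) :
    ContinuousOn (fun x => ∫ u in t..x, f u) I := by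
  intro x hx
  obtain ⟨lo, hlo, hi, hhi, hnhds⟩ := exists_Icc_mem_nhdsWithin hx
  have hmin : min lo t ∈ I := by rcases min_choice lo t with h | h <;> rw [h] <;> assumption
  have hmax : max hi t ∈ I := by rcases max_choice hi t with h | h <;> rw [h] <;> assumption
  have hle : min lo t ≤ max hi t := (min_le_right _ _).trans (le_max_right _ _)
  have hcont := intervalIntegral.continuousOn_primitive_interval' (hf _ hmin _ hmax)
    (by rw [uIcc_of_le hle]; exact ⟨min_le_right _ _, le_max_right _ _⟩)
  rw [uIcc_of_le hle] at hcont
  have hsub : Icc lo hi ⊆ Icc (min lo t) (max hi t) :=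
    Icc_subset_Icc (min_le_left _ _) (le_max_left _ _)
  exact (hcont x (hsub (mem_of_mem_nhdsWithin hx hnhds))).mono_of_mem_nhdsWithin
    (mem_of_superset hnhds hsub)

structure IsDerivChain (I : Set ℝ) (w : ℕ → ℝ → ℝ) (n : ℕ) (d : ℕ → ℝ → ℝ) : Prop where
  intervalIntegrable : ∀ j < n, ∀ z ∈ I, ∀ x ∈ I,
    IntervalIntegrable (fun u => d (j + 1) u * w (j + 1) u) volume z x
  eq_add_integral : ∀ j < n, ∀ z ∈ I, ∀ x ∈ I,
    d j x = d j z + ∫ u in z..x, d (j + 1) u * w (j + 1) u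

section DerivChain

variable {I : Set ℝ} {w : ℕ → ℝ → ℝ} {n : ℕ} {f : ℝ → ℝ} {d e : ℕ → ℝ → ℝ}

theorem IsGenL.isDerivChain (h : IsGenL I w n f d) : IsDerivChain I w n d :=
  ⟨h.integrable, h.deriv_eq⟩

theorem IsGenL.neg (h : IsGenL I w n f d) : IsGenL I w n (-f) (-d) where
  base x hx := by simp [h.base x hx]
  ld := ⟨fun x hx hy => (h.ld.1 x hx hy).neg, fun x hx hy => (h.ld.2 x hx hy).neg⟩
  integrable j hj z hz x hx := by simpa [Pi.neg_def] using (h.integrable j hj z hz x hx).neg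
  deriv_eq j hj z hz x hx := by simp [h.deriv_eq j hj z hz x hx]; ring

theorem IsGenL.memF (h : IsGenL I w n f d) (hmono : MonotoneOn (d n) I) :
    MemF I w (n + 1) n f d :=
  ⟨h, fun j hj hj' => by rwa [show j = n by omega]⟩

namespace IsDerivChain

theorem zero : IsDerivChain I w n (fun _ _ => 0) :=
  ⟨fun _ _ _ _ _ _ => by simp, fun _ _ _ _ _ _ => by simp⟩

theorem const_mul (hd : IsDerivChain I w n d) (c : ℝ) :
    IsDerivChain I w n (fun j x => c * d j x) where
  intervalIntegrable j hj z hz x hx := by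
    simpa only [mul_assoc] using (hd.intervalIntegrable j hj z hz x hx).const_mul c
  eq_add_integral j hj z hz x hx := by
    simp only [mul_assoc, intervalIntegral.integral_const_mul, hd.eq_add_integral j hj z hz x hx,
      mul_add]

theorem continuousOn (hd : IsDerivChain I w n d) {j : ℕ} (hj : j < n) : ContinuousOn (d j) I := by
  intro x hx
  exact ((continuousOn_const.add (continuousOn_primitive_of_intervalIntegrable hx
    (hd.intervalIntegrable j hj))).congr fun y hy => hd.eq_add_integral j hj x hx y hy) x hx

theorem aemeasurable_zero (hd : IsDerivChain I w n d) (hI : MeasurableSet I) {μ : Measure ℝ}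
    (hn : AEMeasurable (d n) (μ.restrict I)) : AEMeasurable (d 0) (μ.restrict I) := by
  rcases Nat.eq_zero_or_pos n with rfl | hn0
  · exact hn
  · exact (hd.continuousOn hn0).aemeasurable hI

theorem le_of_le_right (hd : IsDerivChain I w n d) (he : IsDerivChain I w n e)
    (hI : I.OrdConnected) (hw : ∀ j, ∀ x ∈ I, 0 ≤ w j x) {t : ℝ} (ht : t ∈ I)
    (h0 : ∀ j < n, d j t ≤ e j t) (hn : ∀ x ∈ I, t ≤ x → d n x ≤ e n x) :
    ∀ j ≤ n, ∀ x ∈ I, t ≤ x → d j x ≤ e j x := by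
  intro j hj
  induction hj using Nat.decreasingInduction with
  | self => exact hn
  | of_succ j hj ih =>
    intro x hx htx
    rw [hd.eq_add_integral j hj t ht x hx, he.eq_add_integral j hj t ht x hx]
    refine add_le_add (h0 j hj) (intervalIntegral.integral_mono_on htx
      (hd.intervalIntegrable j hj t ht x hx) (he.intervalIntegrable j hj t ht x hx) fun u hu => ?_)
    have huI := hI.out ht hx hu
    exact mul_le_mul_of_nonneg_right (ih u huI hu.1) (hw _ u huI)

theorem neg_one_pow_mul_eq (hd : IsDerivChain I w n d) {j : ℕ} (hj : j < n) {x t : ℝ}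
    (hx : x ∈ I) (ht : t ∈ I) :
    (-1) ^ (n - j) * d j x = (-1) ^ (n - j) * d j t +
      ∫ u in x..t, (-1) ^ (n - (j + 1)) * (d (j + 1) u * w (j + 1) u) := by
  rw [hd.eq_add_integral j hj t ht x hx, intervalIntegral.integral_const_mul,
    intervalIntegral.integral_symm x t, show n - j = n - (j + 1) + 1 by omega, pow_succ]
  ring

theorem neg_one_pow_mul_le_of_le_left (hd : IsDerivChain I w n d) (he : IsDerivChain I w n e)
    (hI : I.OrdConnected) (hw : ∀ j, ∀ x ∈ I, 0 ≤ w j x) {t : ℝ} (ht : t ∈ I)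
    (h0 : ∀ j < n, (-1) ^ (n - j) * d j t ≤ (-1) ^ (n - j) * e j t)
    (hn : ∀ x ∈ I, x ≤ t → d n x ≤ e n x) :
    ∀ j ≤ n, ∀ x ∈ I, x ≤ t → (-1) ^ (n - j) * d j x ≤ (-1) ^ (n - j) * e j x := by
  intro j hj
  induction hj using Nat.decreasingInduction with
  | self => simpa using hn
  | of_succ j hj ih =>
    intro x hx hxt
    rw [hd.neg_one_pow_mul_eq hj hx ht, he.neg_one_pow_mul_eq hj hx ht]
    refine add_le_add (h0 j hj) (intervalIntegral.integral_mono_on hxt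
      ((hd.intervalIntegrable j hj x hx t ht).const_mul _)
      ((he.intervalIntegrable j hj x hx t ht).const_mul _) fun u hu => ?_)
    have huI := hI.out hx ht hu
    simp only [← mul_assoc]
    exact mul_le_mul_of_nonneg_right (ih u huI hu.2) (hw _ u huI)

theorem neg_one_pow_mul_pos_left (hd : IsDerivChain I w n d) (hI : I.OrdConnected)
    (hw : ∀ j, ∀ x ∈ I, 0 < w j x) {t : ℝ} (ht : t ∈ I) (h0 : ∀ j < n, d j t = 0)
    (hn : ∀ x ∈ I, x < t → 0 < d n x) :
    ∀ j ≤ n, ∀ x ∈ I, x < t → 0 < (-1) ^ (n - j) * d j x := by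
  intro j hj
  induction hj using Nat.decreasingInduction with
  | self => simpa using hn
  | of_succ j hj ih =>
    intro x hx hxt
    rw [hd.neg_one_pow_mul_eq hj hx ht, h0 j hj, mul_zero, zero_add]
    refine intervalIntegral.intervalIntegral_pos_of_pos_on
      ((hd.intervalIntegrable j hj x hx t ht).const_mul _) (fun u hu => ?_) hxt
    have huI := hI.out hx ht (Ioo_subset_Icc_self hu)
    rw [← mul_assoc]
    exact mul_pos (ih u huI hu.2) (hw _ u huI)

end IsDerivChain

end DerivChain

def primitiveChain (w : ℕ → ℝ → ℝ) (n : ℕ) (t : ℝ) (g : ℝ → ℝ) (c : ℕ → ℝ) (j : ℕ) : ℝ → ℝ :=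
  if j < n then fun x => c j + ∫ u in t..x, primitiveChain w n t g c (j + 1) u * w (j + 1) u
  else g
termination_by n - j

section PrimitiveChain

variable {I : Set ℝ} {w : ℕ → ℝ → ℝ} {n j : ℕ} {t : ℝ} {g : ℝ → ℝ} {c : ℕ → ℝ}

theorem primitiveChain_of_le (h : n ≤ j) : primitiveChain w n t g c j = g := by
  rw [primitiveChain, if_neg (not_lt.2 h)]

theorem primitiveChain_of_lt (h : j < n) (x : ℝ) :
    primitiveChain w n t g c j x =
      c j + ∫ u in t..x, primitiveChain w n t g c (j + 1) u * w (j + 1) u := by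
  rw [primitiveChain, if_pos h]

theorem primitiveChain_self_of_lt (h : j < n) : primitiveChain w n t g c j t = c j := by
  simp [primitiveChain_of_lt h]

theorem locBddMeasurableOn_primitiveChain (hI : I.OrdConnected) (hw : IsGauge I w) (ht : t ∈ I)
    (hg : LocBddMeasurableOn g I) (j : ℕ) : LocBddMeasurableOn (primitiveChain w n t g c j) I := by
  rcases le_or_gt n j with hnj | hjn
  · rwa [primitiveChain_of_le hnj]
  replace hjn := hjn.le
  induction hjn using Nat.decreasingInduction with
  | self => rwa [primitiveChain_of_le le_rfl]
  | of_succ j hj ih =>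
    have hint := ih.mul (hw.locBddMeasurableOn hI (j + 1))
    refine ContinuousOn.locBddMeasurableOn hI ((continuousOn_const.add
      (continuousOn_primitive_of_intervalIntegrable ht fun z hz x hx =>
        hint.intervalIntegrable hz hx)).congr fun x _ => primitiveChain_of_lt hj x)

theorem isDerivChain_primitiveChain (hI : I.OrdConnected) (hw : IsGauge I w) (ht : t ∈ I)
    (hg : LocBddMeasurableOn g I) : IsDerivChain I w n (primitiveChain w n t g c) := by
  have hint : ∀ j, ∀ z ∈ I, ∀ x ∈ I, IntervalIntegrable
      (fun u => primitiveChain w n t g c (j + 1) u * w (j + 1) u) volume z x :=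
    fun j z hz x hx => ((locBddMeasurableOn_primitiveChain hI hw ht hg (j + 1)).mul
      (hw.locBddMeasurableOn hI (j + 1))).intervalIntegrable hz hx
  refine ⟨fun j _ => hint j, fun j hj z hz x hx => ?_⟩
  rw [primitiveChain_of_lt hj, primitiveChain_of_lt hj, add_assoc,
    intervalIntegral.integral_add_adjacent_intervals (hint j t ht z hz) (hint j z hz x hx)]

theorem isGenL_primitiveChain (hI : I.OrdConnected) (hw : IsGauge I w) (ht : t ∈ I)
    (hg : LocBddMeasurableOn g I) (hgLD : IsLD I g) :
    IsGenL I w n (fun x => primitiveChain w n t g c 0 x * w 0 x) (primitiveChain w n t g c) :=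
  have h := isDerivChain_primitiveChain (c := c) hI hw ht hg
  ⟨fun _ _ => rfl, by rwa [primitiveChain_of_le le_rfl], h.intervalIntegrable, h.eq_add_integral⟩

end PrimitiveChain

-- for antitone `t`, the number of indices `m` with `x < t m` (see `lt_numAbove_iff`)
def numAbove (t : ℕ → ℝ) (x : ℝ) : ℕ := sInf {m | t m ≤ x}

def stepSum (t : ℕ → ℝ) (c : ℕ → ℕ) (x : ℝ) : ℝ := ∑ m ∈ Finset.range (numAbove t x), (c m : ℝ)

section StepSum

variable {t : ℕ → ℝ} {c : ℕ → ℕ} {x y : ℝ}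

theorem lt_numAbove_iff (ht : Antitone t) (hx : ∃ m, t m ≤ x) {m : ℕ} :
    m < numAbove t x ↔ x < t m := by
  refine ⟨fun hm => lt_of_not_ge (Nat.notMem_of_lt_sInf hm), fun hxm => ?_⟩
  by_contra! h
  exact (((ht h).trans (Nat.sInf_mem hx)).trans_lt hxm).false

theorem stepSum_nonneg : 0 ≤ stepSum t c x :=
  Finset.sum_nonneg fun m _ => Nat.cast_nonneg (c m)

theorem le_stepSum (ht : Antitone t) (hx : ∃ m, t m ≤ x) {M : ℕ} (hxM : x < t M) :
    (c M : ℝ) ≤ stepSum t c x :=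
  Finset.single_le_sum (fun m _ => Nat.cast_nonneg (c m))
    (Finset.mem_range.2 ((lt_numAbove_iff ht hx).2 hxM))

theorem stepSum_eq_zero (hx : t 0 ≤ x) : stepSum t c x = 0 := by
  rw [stepSum, show numAbove t x = 0 from Nat.sInf_eq_zero.2 (Or.inl hx), Finset.sum_range_zero]

theorem stepSum_le_stepSum (ht : Antitone t) (hx : ∃ m, t m ≤ x) (hxy : x ≤ y) :
    stepSum t c y ≤ stepSum t c x := by
  have hy : ∃ m, t m ≤ y := hx.imp fun m hm => hm.trans hxy
  refine Finset.sum_le_sum_of_subset_of_nonneg (Finset.range_subset_range.2 (le_of_forall_lt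
    fun m hm => ?_)) fun m _ _ => Nat.cast_nonneg (c m)
  exact (lt_numAbove_iff ht hx).2 (hxy.trans_lt ((lt_numAbove_iff ht hy).1 hm))

theorem monotoneOn_neg_stepSum {I : Set ℝ} (ht : Antitone t)
    (hcoinit : ∀ x ∈ I, ∃ m, t m ≤ x) : MonotoneOn (fun x => -stepSum t c x) I :=
  fun x hx _ _ hxy => neg_le_neg (stepSum_le_stepSum ht (hcoinit x hx) hxy)

theorem stepSum_eventuallyEq_right (ht : Antitone t) (hx : ∃ m, t m ≤ x) :
    ∀ᶠ y in 𝓝[≥] x, stepSum t c y = stepSum t c x := by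
  have hnear : ∀ᶠ y in 𝓝 x, ∀ m ∈ Finset.range (numAbove t x), y < t m :=
    (Filter.eventually_all_finset _).2 fun m hm =>
      eventually_lt_nhds ((lt_numAbove_iff ht hx).1 (Finset.mem_range.1 hm))
  filter_upwards [nhdsWithin_le_nhds hnear, self_mem_nhdsWithin] with y hy hxy
  have hy' : ∃ m, t m ≤ y := hx.imp fun m hm => hm.trans hxy
  have hcount : numAbove t y = numAbove t x := eq_of_forall_lt_iff fun m => by
    rw [lt_numAbove_iff ht hy', lt_numAbove_iff ht hx]
    exact ⟨fun h => lt_of_le_of_lt hxy h, fun h => hy m (Finset.mem_range.2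
      ((lt_numAbove_iff ht hx).2 h))⟩
  rw [stepSum, stepSum, hcount]

theorem isLD_neg_stepSum {I : Set ℝ} (ht : Antitone t) (hcoinit : ∀ x ∈ I, ∃ m, t m ≤ x)
    (hq : ∃ q ∈ I, t 0 < q) : IsLD I (fun x => -stepSum t c x) := by
  refine ⟨fun x hx _ => ?_, fun x hx hmax => ?_⟩
  · refine tendsto_const_nhds.congr' (nhdsWithin_mono _ (fun y hy => mem_Ici.2 hy.2.le)
      ((stepSum_eventuallyEq_right (c := c) ht (hcoinit x hx)).mono fun y hy => by
        dsimp only; rw [hy]))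
  · obtain ⟨q, hq, htq⟩ := hq
    have htx : t 0 < x := htq.trans_le (hmax q hq)
    refine tendsto_const_nhds.congr' (nhdsWithin_le_nhds ((eventually_gt_nhds htx).mono
      fun y hy => ?_))
    dsimp only
    rw [stepSum_eq_zero hy.le, stepSum_eq_zero htx.le]

end StepSum

theorem exists_antitone_seq_coinitial {I : Set ℝ} (hnomin : ¬∃ x, IsLeast I x) {p : ℝ}
    (hp : p ∈ I) :
    ∃ t : ℕ → ℝ, Antitone t ∧ (∀ m, t m ∈ I) ∧ (∀ x ∈ I, ∃ m, t m ≤ x) ∧ t 0 = p := by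
  have : Nonempty I := ⟨⟨p, hp⟩⟩
  obtain ⟨u, hu⟩ := TopologicalSpace.exists_dense_seq I
  let t : ℕ → ℝ := fun m => Nat.rec p (fun k tk => min tk (u k)) m
  have ht_succ : ∀ k, t (k + 1) = min (t k) (u k) := fun _ => rfl
  refine ⟨t, antitone_nat_of_succ_le fun k => (ht_succ k).trans_le (min_le_left _ _), fun m => ?_,
    fun x hx => ?_, rfl⟩
  · induction m with
    | zero => exact hp
    | succ k ih =>
      rw [ht_succ]
      rcases min_choice (t k) (u k) with h | h <;> rw [h]
      exacts [ih, (u k).2]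
  · obtain ⟨y, hy, hyx⟩ : ∃ y ∈ I, y < x := by
      by_contra! h
      exact hnomin ⟨x, hx, h⟩
    obtain ⟨k, hk⟩ := hu.exists_mem_open (isOpen_lt continuous_subtype_val continuous_const)
      ⟨⟨y, hy⟩, hyx⟩
    exact ⟨k + 1, ((ht_succ k).trans_le (min_le_right _ _)).trans hk.le⟩

section Admissible

variable {I : Set ℝ} {w : ℕ → ℝ → ℝ} {n : ℕ} {ν : Measure ℝ}

theorem lintegral_ofReal_abs_ne_top (hI : I.OrdConnected) (hw : IsGauge I w)
    (hF : ∀ f : ℝ → ℝ, (∃ d, MemF I w (n + 1) n f d) →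
      (∫⁻ x in I, ENNReal.ofReal (-f x) ∂ν) ≠ ⊤)
    {p : ℝ → ℝ} {dp : ℕ → ℝ → ℝ} (hp : IsGenL I w n p dp) {c : ℝ} (hc : ∀ x ∈ I, dp n x = c) :
    ∫⁻ x in I, ENNReal.ofReal |p x| ∂ν ≠ ⊤ := by
  have hIm := hI.measurableSet
  have hneg := hF p ⟨dp, hp.memF fun x hx y hy _ => by rw [hc x hx, hc y hy]⟩
  have hpos := hF (-p) ⟨-dp, hp.neg.memF fun x hx y hy _ => by simp [hc x hx, hc y hy]⟩
  have hdn : AEMeasurable (dp n) (ν.restrict I) :=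
    aemeasurable_const.congr ((ae_restrict_iff' hIm).2 (ae_of_all _ fun x hx => (hc x hx).symm))
  have hmeas : AEMeasurable p (ν.restrict I) :=
    ((hp.isDerivChain.aemeasurable_zero hIm hdn).mul (hw.aemeasurable hIm 0 ν)).congr
      ((ae_restrict_iff' hIm).2 (ae_of_all _ fun x hx => (hp.base x hx).symm))
  have habs : ∀ r : ℝ, ENNReal.ofReal |r| = ENNReal.ofReal r + ENNReal.ofReal (-r) := by
    intro r
    rcases le_total 0 r with h | h
    · rw [abs_of_nonneg h, ENNReal.ofReal_of_nonpos (neg_nonpos.2 h), add_zero]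
    · rw [abs_of_nonpos h, ENNReal.ofReal_of_nonpos h, zero_add]
  simp_rw [habs]
  rw [lintegral_add_left' hmeas.ennreal_ofReal]
  exact ENNReal.add_ne_top.2 ⟨by simpa using hpos, hneg⟩

theorem lintegral_ofReal_neg_ne_top (hI : I.OrdConnected) (hw : IsGauge I w)
    (hpoly : ∀ p : ℝ → ℝ, (∃ dp, IsGenL I w n p dp ∧ ∃ c', ∀ x ∈ I, dp n x = c') →
      (∫⁻ x in I, ENNReal.ofReal |p x| ∂ν) ≠ ⊤)
    {a' : ℝ} (ha' : a' ∈ I) (hnull : ν (I ∩ Iio a') = 0)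
    {f : ℝ → ℝ} {d : ℕ → ℝ → ℝ} (hf : MemF I w (n + 1) n f d) :
    (∫⁻ x in I, ENNReal.ofReal (-f x) ∂ν) ≠ ⊤ := by
  obtain ⟨hgen, hmono⟩ := hf
  have hw0 : ∀ j, ∀ x ∈ I, 0 ≤ w j x := fun j x hx => ((hw j).1 x hx).le
  -- the Taylor `w`-polynomial of `f` at `a'`
  set E := primitiveChain w n a' (fun _ => d n a') (fun j => d j a')
  have hEn : E n = fun _ => d n a' := primitiveChain_of_le le_rfl
  have hE : IsGenL I w n (fun x => E 0 x * w 0 x) E :=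
    isGenL_primitiveChain hI hw ha' (monotoneOn_const.locBddMeasurableOn hI)
      ⟨fun _ _ _ => tendsto_const_nhds, fun _ _ _ => tendsto_const_nhds⟩
  have hle : ∀ x ∈ I, a' ≤ x → E 0 x ≤ d 0 x :=
    hE.isDerivChain.le_of_le_right hgen.isDerivChain hI hw0 ha'
      (fun j hj => (primitiveChain_self_of_lt hj).le)
      (fun x hx hax => by rw [hEn]; exact hmono n (by omega) le_rfl ha' hx hax) 0 (Nat.zero_le n)
  refine ne_top_of_le_ne_top (hpoly _ ⟨E, hE, d n a', fun x _ => by rw [hEn]⟩)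
    (lintegral_mono_ae ?_)
  rw [ae_restrict_iff' hI.measurableSet]
  filter_upwards [measure_eq_zero_iff_ae_notMem.1 hnull] with x hx hxI
  have hax : a' ≤ x := not_lt.1 fun h => hx ⟨hxI, h⟩
  rw [hgen.base x hxI]
  exact ENNReal.ofReal_le_ofReal ((neg_le_neg (mul_le_mul_of_nonneg_right (hle x hxI hax)
    (hw0 0 x hxI))).trans (neg_le_abs _))

theorem antitoneOn_indicator_Iio (s : ℝ) : AntitoneOn ((Iio s).indicator (1 : ℝ → ℝ)) I := by
  intro x _ y _ hxy
  by_cases hy : y < s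
  · simp [hy, hxy.trans_lt hy]
  · by_cases hx : x < s <;> simp [hx, hy]

theorem setLIntegral_primitiveChain_indicator_ne_zero (hI : I.OrdConnected) (hw : IsGauge I w)
    (hn : Even n) {s : ℝ} (hs : s ∈ I) (hν : ν (I ∩ Iio s) ≠ 0) :
    ∫⁻ x in I ∩ Iio s, ENNReal.ofReal
      (primitiveChain w n s ((Iio s).indicator 1) 0 0 x * w 0 x) ∂ν ≠ 0 := by
  set e := primitiveChain w n s ((Iio s).indicator 1) 0
  have hIm := hI.measurableSet
  have he : IsDerivChain I w n e := isDerivChain_primitiveChain hI hw hs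
    ((antitoneOn_indicator_Iio s).locBddMeasurableOn hI)
  have hpos : ∀ x ∈ I, x < s → 0 < e 0 x := by
    intro x hx hxs
    have := he.neg_one_pow_mul_pos_left hI (fun j => (hw j).1) hs
      (fun j hj => primitiveChain_self_of_lt hj)
      (fun x _ hx => by simp [e, primitiveChain_of_le le_rfl, hx]) 0 (Nat.zero_le n) x hx hxs
    rwa [Nat.sub_zero, hn.neg_one_pow, one_mul] at this
  have hen : AEMeasurable (e n) (ν.restrict I) := by
    rw [show e n = _ from primitiveChain_of_le le_rfl]
    exact (measurable_const.indicator measurableSet_Iio).aemeasurable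
  have hmeas : AEMeasurable (fun x => ENNReal.ofReal (e 0 x * w 0 x)) (ν.restrict (I ∩ Iio s)) :=
    (((he.aemeasurable_zero hIm hen).mul (hw.aemeasurable hIm 0 ν)).mono_measure
      (Measure.restrict_mono inter_subset_left le_rfl)).ennreal_ofReal
  rw [Ne, setLIntegral_eq_zero_iff' (hIm.inter measurableSet_Iio) hmeas]
  intro h
  apply hν
  rw [measure_eq_zero_iff_ae_notMem]
  filter_upwards [h] with x hx hxA
  exact (ENNReal.ofReal_pos.2 (mul_pos (hpos x hxA.1 hxA.2) ((hw 0).1 x hxA.1))).ne' (hx hxA)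

end Admissible

theorem primitiveChain_neg_stepSum_le {I : Set ℝ} (hI : I.OrdConnected) {w : ℕ → ℝ → ℝ}
    (hw : IsGauge I w) {n : ℕ} (hn : Even n) {t : ℕ → ℝ} (ht : Antitone t) (htI : ∀ m, t m ∈ I)
    (hcoinit : ∀ x ∈ I, ∃ m, t m ≤ x) (c : ℕ → ℕ) (M : ℕ) {x : ℝ} (hx : x ∈ I) (hxt : x ≤ t M) :
    primitiveChain w n (t 0) (fun x => -stepSum t c x) 0 0 x ≤
      -(c M * primitiveChain w n (t M) ((Iio (t M)).indicator 1) 0 0 x) := by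
  set d := primitiveChain w n (t 0) (fun x => -stepSum t c x) 0
  set e := primitiveChain w n (t M) ((Iio (t M)).indicator 1) 0
  have hw0 : ∀ j, ∀ x ∈ I, 0 ≤ w j x := fun j x hx => ((hw j).1 x hx).le
  have hd : IsDerivChain I w n d := isDerivChain_primitiveChain hI hw (htI 0)
    ((monotoneOn_neg_stepSum ht hcoinit).locBddMeasurableOn hI)
  have he : IsDerivChain I w n e := isDerivChain_primitiveChain hI hw (htI M)
    ((antitoneOn_indicator_Iio (t M)).locBddMeasurableOn hI)
  have hdn : d n = fun x => -stepSum t c x := primitiveChain_of_le le_rfl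
  -- comparison with the zero chain: the signs of `d` at `t M`, the initial conditions used below
  have hd_sign := hd.neg_one_pow_mul_le_of_le_left IsDerivChain.zero hI hw0 (htI 0)
    (fun j hj => by simp [show d j (t 0) = 0 from primitiveChain_self_of_lt hj])
    (fun x _ _ => by rw [hdn]; exact neg_nonpos.2 stepSum_nonneg)
  have h := hd.neg_one_pow_mul_le_of_le_left (he.const_mul (-(c M))) hI hw0 (htI M)
    (fun j hj => by
      simpa [e, primitiveChain_self_of_lt hj] using
        hd_sign j hj.le (t M) (htI M) (ht (Nat.zero_le M)))
    (fun x hx _ => by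
      rw [hdn, show e n = _ from primitiveChain_of_le le_rfl]
      by_cases h : x < t M
      · simpa [h] using le_stepSum ht (hcoinit x hx) h
      · simpa [h] using stepSum_nonneg)
    0 (Nat.zero_le n) x hx hxt
  rwa [Nat.sub_zero, hn.neg_one_pow, one_mul, one_mul, neg_mul] at h

theorem exists_measure_inter_Iio_eq_zero {I : Set ℝ} (hI : I.OrdConnected)
    (hIne : ∃ p ∈ I, ∃ q ∈ I, p < q) {w : ℕ → ℝ → ℝ} (hw : IsGauge I w) {n : ℕ} (hn : Even n)
    (hnomin : ¬∃ x, IsLeast I x) {ν : Measure ℝ}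
    (hF : ∀ f : ℝ → ℝ, (∃ d, MemF I w (n + 1) n f d) →
      (∫⁻ x in I, ENNReal.ofReal (-f x) ∂ν) ≠ ⊤) :
    ∃ a' ∈ I, ν (I ∩ Iio a') = 0 := by
  by_contra! hν
  obtain ⟨p, hp, q, hq, hpq⟩ := hIne
  obtain ⟨t, ht, htI, hcoinit, rfl⟩ := exists_antitone_seq_coinitial hnomin hp
  set e : ℕ → ℝ → ℝ := fun M => primitiveChain w n (t M) ((Iio (t M)).indicator 1) 0 0
  choose c hc using fun M : ℕ => ENNReal.exists_nat_mul_gt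
    (setLIntegral_primitiveChain_indicator_ne_zero hI hw hn (htI M) (hν _ (htI M)))
    (ENNReal.natCast_ne_top M)
  set d := primitiveChain w n (t 0) (fun x => -stepSum t c x) 0
  have hG := monotoneOn_neg_stepSum (c := c) ht hcoinit
  have hd : IsGenL I w n (fun x => d 0 x * w 0 x) d := isGenL_primitiveChain hI hw (htI 0)
    (hG.locBddMeasurableOn hI) (isLD_neg_stepSum ht hcoinit ⟨q, hq, hpq⟩)
  obtain ⟨M, hM⟩ := ENNReal.exists_nat_gt
    (hF _ ⟨d, hd.memF (by rwa [show d n = _ from primitiveChain_of_le le_rfl])⟩)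
  have hle : (c M : ℝ≥0∞) * ∫⁻ x in I ∩ Iio (t M), ENNReal.ofReal (e M x * w 0 x) ∂ν ≤
      ∫⁻ x in I, ENNReal.ofReal (-(d 0 x * w 0 x)) ∂ν := by
    rw [← lintegral_const_mul' _ _ (ENNReal.natCast_ne_top _)]
    refine (setLIntegral_mono' (hI.measurableSet.inter measurableSet_Iio) fun x hx => ?_).trans
      (lintegral_mono_set inter_subset_left)
    rw [← ENNReal.ofReal_natCast, ← ENNReal.ofReal_mul (Nat.cast_nonneg _), ← mul_assoc, ← neg_mul]
    refine ENNReal.ofReal_le_ofReal (mul_le_mul_of_nonneg_right ?_ ((hw 0).1 x hx.1).le)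
    exact le_neg_of_le_neg (primitiveChain_neg_stepSum_le hI hw hn ht htI hcoinit c M hx.1 hx.2.le)
  exact (hM.trans ((hc M).trans_le hle)).false

/-- Proposition `N_+^k`, part (iii): the exceptional case `k = n+1`,
`k` odd, `a ∉ I`: characterization of the admissible measures for `F_+^{n+1:n}(I)`. -/
theorem stmt_13 (I : Set ℝ) (hI : I.OrdConnected) (hIne : ∃ p ∈ I, ∃ q ∈ I, p < q)
    (w : ℕ → ℝ → ℝ) (hw : IsGauge I w)
    (n : ℕ) (hodd : Odd (n + 1))
    (hnomin : ¬∃ x, IsLeast I x)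
    (ν : Measure ℝ) :
    (∀ f : ℝ → ℝ, (∃ d, MemF I w (n + 1) n f d) →
        (∫⁻ x in I, ENNReal.ofReal (-f x) ∂ν) ≠ ⊤) ↔
    ((∀ p : ℝ → ℝ, (∃ dp, IsGenL I w n p dp ∧ ∃ c', ∀ x ∈ I, dp n x = c') →
        (∫⁻ x in I, ENNReal.ofReal |p x| ∂ν) ≠ ⊤) ∧
      ∃ a' ∈ I, ν (I ∩ Iio a') = 0) := by
  have hn : Even n := by simpa [Nat.odd_add_one] using hodd
  constructor
  · intro hF
    exact ⟨fun p ⟨dp, hp, c', hc⟩ => lintegral_ofReal_abs_ne_top hI hw hF hp hc,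
      exists_measure_inter_Iio_eq_zero hI hIne hw hn hnomin hF⟩
  · rintro ⟨hpoly, a', ha', hnull⟩ f ⟨d, hf⟩
    exact lintegral_ofReal_neg_ne_top hI hw hpoly ha' hnull hf

end
end
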